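/- arXiv:0803.0890 — 3 statements merged into one kernel-verified Lean document; each statement's English description precedes it below -/
import Mathlib

section
/- Assume X_{i,j} = P_{i,j} = 0 whenever dist(i,j) > R. For all i, j ∈ L and all t ∈ ℝ, writing a_{i,j} = max{0, ⌈(d_{i,j}−1)/2⌉}, one has √‖XP‖ · |C^{pp}_{i,j}(t)| ≤ ‖X‖ · τ^{2a_{i,j}+1} · cosh(τ)/(2a_{i,j}+1)!. -/
/-- The ℓ²→ℓ² operator norm of a real matrix. -/
noncomputable def l2OpNorm {V : Type*} [Fintype V] [DecidableEq V] (M : Matrix V V ℝ) : ℝ :=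
  ‖Matrix.toEuclideanCLM (𝕜 := ℝ) M‖

/-- `C^{pp}_{i,j}(t) = ∑_{n≥0} (−1)^n t^{2n+1} ((XP)^n X)_{i,j}/(2n+1)!`,
which equals `i[p̂_i(t), p̂_j]` for the harmonic Hamiltonian. -/
noncomputable def Cpp {V : Type*} [Fintype V] [DecidableEq V]
    (X P : Matrix V V ℝ) (i j : V) (t : ℝ) : ℝ :=
  ∑' n : ℕ, (-1 : ℝ) ^ n * t ^ (2 * n + 1) * (((X * P) ^ n * X) i j) /
    (Nat.factorial (2 * n + 1))

/-!
The matrix `(XP)ⁿX` has interaction range `(2n+1)R`, so the first `a` terms of the series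
for `C^{pp}_{i,j}(t)` vanish. The `n`-th term is bounded, after multiplication by `√‖XP‖`, by
`‖X‖ τ^{2n+1}/(2n+1)!`, and `(2a+1)! (2n)! ≤ (2a+2n+1)!` bounds the remaining tail by
`‖X‖ τ^{2a+1}/(2a+1)!` times the series of `cosh τ`.
-/

open scoped Matrix.Norms.L2Operator Nat

namespace Matrix

theorem norm_apply_le_l2_opNorm {𝕜 m n : Type*} [RCLike 𝕜] [Fintype m] [Fintype n]
    [DecidableEq n] (A : Matrix m n 𝕜) (i : m) (j : n) : ‖A i j‖ ≤ ‖A‖ := by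
  simpa [mulVec_single] using
    (PiLp.norm_apply_le _ i).trans (A.l2_opNorm_mulVec (EuclideanSpace.single j 1))

theorem l2_opNorm_pow_mul_le {𝕜 n : Type*} [RCLike 𝕜] [Fintype n] [DecidableEq n]
    (A B : Matrix n n 𝕜) (k : ℕ) : ‖A ^ k * B‖ ≤ ‖A‖ ^ k * ‖B‖ := by
  induction k with
  | zero => simp
  | succ k ih =>
    calc ‖A ^ (k + 1) * B‖ = ‖A * (A ^ k * B)‖ := by rw [pow_succ', mul_assoc]
      _ ≤ ‖A‖ * (‖A‖ ^ k * ‖B‖) := (l2_opNorm_mul _ _).trans (by gcongr)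
      _ = ‖A‖ ^ (k + 1) * ‖B‖ := by ring

end Matrix

section Locality

variable {V α : Type*} (G : SimpleGraph V)

def Matrix.IsLocal [Zero α] (r : ℕ) (A : Matrix V V α) : Prop :=
  ∀ i j, r < G.dist i j → A i j = 0

variable {G}

theorem Matrix.IsLocal.mul [Fintype V] [NonUnitalNonAssocSemiring α] (hconn : G.Connected)
    {r s : ℕ} {A B : Matrix V V α} (hA : A.IsLocal G r) (hB : B.IsLocal G s) :
    (A * B).IsLocal G (r + s) := by
  intro i j hij
  refine Finset.sum_eq_zero fun k _ => ?_
  by_cases hik : r < G.dist i k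
  · simp [hA i k hik]
  · have := hconn.dist_triangle (u := i) (v := k) (w := j)
    simp [hB k j (by omega)]

theorem Matrix.IsLocal.pow_mul [Fintype V] [DecidableEq V] [Semiring α] (hconn : G.Connected)
    {r s : ℕ} {A B : Matrix V V α} (hA : A.IsLocal G r) (hB : B.IsLocal G s) (n : ℕ) :
    (A ^ n * B).IsLocal G (n * r + s) := by
  induction n with
  | zero => simpa using hB
  | succ n ih =>
    rw [pow_succ', mul_assoc, show (n + 1) * r + s = r + (n * r + s) by ring]
    exact hA.mul hconn ih

end Locality

theorem pow_add_div_factorial_le {x : ℝ} (hx : 0 ≤ x) (m k : ℕ) :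
    x ^ (m + k) / (m + k)! ≤ x ^ m / m ! * (x ^ k / k !) := by
  rw [pow_add, div_mul_div_comm]
  gcongr
  exact_mod_cast Nat.le_of_dvd (Nat.factorial_pos _)
    (Nat.factorial_mul_factorial_dvd_factorial_add m k)

theorem abs_tsum_le_mul_cosh_of_eq_zero_of_lt {g : ℕ → ℝ} {C τ : ℝ} {a : ℕ}
    (hC : 0 ≤ C) (hτ : 0 ≤ τ) (hzero : ∀ n < a, g n = 0)
    (hbound : ∀ n, |g n| ≤ C * τ ^ (2 * n + 1) / (2 * n + 1)!) :
    |∑' n, g n| ≤ C * τ ^ (2 * a + 1) * Real.cosh τ / (2 * a + 1)! := by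
  have hshift : ∑' n, g (n + a) = ∑' n, g n :=
    (add_left_injective a).tsum_eq fun n hn =>
      ⟨n - a, Nat.sub_add_cancel (not_lt.1 (mt (hzero n) hn))⟩
  rw [← hshift, mul_div_right_comm]
  refine tsum_of_norm_bounded ((Real.hasSum_cosh τ).mul_left _) fun n =>
    (Real.norm_eq_abs _).trans_le <| (hbound (n + a)).trans ?_
  calc C * τ ^ (2 * (n + a) + 1) / (2 * (n + a) + 1)!
      = C * (τ ^ ((2 * a + 1) + 2 * n) / ((2 * a + 1) + 2 * n)!) := by
        rw [show 2 * (n + a) + 1 = (2 * a + 1) + 2 * n by ring, mul_div_assoc]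
    _ ≤ C * (τ ^ (2 * a + 1) / (2 * a + 1)! * (τ ^ (2 * n) / (2 * n)!)) := by
        gcongr; exact pow_add_div_factorial_le hτ _ _
    _ = C * τ ^ (2 * a + 1) / (2 * a + 1)! * (τ ^ (2 * n) / (2 * n)!) := by ring

theorem mul_lt_of_lt_toNat_ceil {d R n : ℕ}
    (hn : n < (max 0 ⌈((d : ℝ) / R - 1) / 2⌉).toNat) : (2 * n + 1) * R < d := by
  have h : (n : ℝ) < ((d : ℝ) / R - 1) / 2 := by
    have := Int.lt_toNat.1 hn
    rw [lt_max_iff, Int.lt_ceil] at this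
    exact this.resolve_left (by omega)
  rcases R.eq_zero_or_pos with rfl | hR
  · -- `d / 0 = 0`, so `h` says `n < -1/2`
    simp at h; linarith
  · have hR' : (0 : ℝ) < R := by exact_mod_cast hR
    rw [lt_div_iff₀ two_pos, lt_sub_iff_add_lt, lt_div_iff₀ hR'] at h
    exact_mod_cast (by push_cast; linarith : ((2 * n + 1 : ℕ) : ℝ) * R < d)

theorem sqrt_mul_abs_cpp_term_le {V : Type*} [Fintype V] [DecidableEq V] (X P : Matrix V V ℝ)
    (i j : V) {t τ : ℝ} (hτ : √(l2OpNorm (X * P)) * |t| ≤ τ) (n : ℕ) :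
    √(l2OpNorm (X * P)) * |(-1 : ℝ) ^ n * t ^ (2 * n + 1) * ((X * P) ^ n * X) i j /
      (2 * n + 1)!| ≤ l2OpNorm X * τ ^ (2 * n + 1) / (2 * n + 1)! := by
  set S := √(l2OpNorm (X * P))
  have hS : 0 ≤ S := Real.sqrt_nonneg _
  have hX : 0 ≤ l2OpNorm X := norm_nonneg _
  have hentry : |((X * P) ^ n * X) i j| ≤ S ^ (2 * n) * l2OpNorm X := by
    have hS2 : S ^ 2 = l2OpNorm (X * P) := Real.sq_sqrt (norm_nonneg _)
    rw [pow_mul, hS2]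
    exact (Matrix.norm_apply_le_l2_opNorm _ i j).trans
      (Matrix.l2_opNorm_pow_mul_le (X * P) X n)
  calc S * |(-1 : ℝ) ^ n * t ^ (2 * n + 1) * ((X * P) ^ n * X) i j / (2 * n + 1)!|
      = S * |t| ^ (2 * n + 1) * |((X * P) ^ n * X) i j| / (2 * n + 1)! := by
        simp [abs_div, abs_mul, mul_assoc, mul_div_assoc]
    _ ≤ S * |t| ^ (2 * n + 1) * (S ^ (2 * n) * l2OpNorm X) / (2 * n + 1)! := by gcongr
    _ = l2OpNorm X * (S * |t|) ^ (2 * n + 1) / (2 * n + 1)! := by ring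
    _ ≤ l2OpNorm X * τ ^ (2 * n + 1) / (2 * n + 1)! := by gcongr

theorem lieb_robinson_local_pp_general {V : Type*} [Fintype V] [DecidableEq V]
    (G : SimpleGraph V) (hconn : G.Connected) (R : ℕ)
    (X P : Matrix V V ℝ)
    (hXloc : ∀ i j : V, R < G.dist i j → X i j = 0)
    (hPloc : ∀ i j : V, R < G.dist i j → P i j = 0)
    (i j : V) (t : ℝ) :
    let τ : ℝ := max (Real.sqrt (l2OpNorm (P * X))) (Real.sqrt (l2OpNorm (X * P))) * |t|
    let a : ℕ := (max 0 ⌈((G.dist i j : ℝ) / R - 1) / 2⌉).toNat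
    Real.sqrt (l2OpNorm (X * P)) * |Cpp X P i j t| ≤
      l2OpNorm X * τ ^ (2 * a + 1) * Real.cosh τ / (Nat.factorial (2 * a + 1)) := by
  intro τ a
  have hτ : √(l2OpNorm (X * P)) * |t| ≤ τ :=
    mul_le_mul_of_nonneg_right (le_max_right _ _) (abs_nonneg t)
  have hlocal (n : ℕ) : ((X * P) ^ n * X).IsLocal G ((2 * n + 1) * R) := by
    have := (Matrix.IsLocal.mul hconn hXloc hPloc).pow_mul hconn hXloc n
    rwa [show n * (R + R) + R = (2 * n + 1) * R by ring] at this
  rw [← abs_of_nonneg (Real.sqrt_nonneg _), ← abs_mul, Cpp, ← tsum_mul_left]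
  refine abs_tsum_le_mul_cosh_of_eq_zero_of_lt (norm_nonneg _)
    ((mul_nonneg (Real.sqrt_nonneg _) (abs_nonneg t)).trans hτ)
    (fun n hn => ?_) (fun n => ?_)
  · simp [hlocal n i j (mul_lt_of_lt_toNat_ceil hn)]
  · rw [abs_mul, abs_of_nonneg (Real.sqrt_nonneg _)]
    exact sqrt_mul_abs_cpp_term_le X P i j hτ n

/-- **Lieb-Robinson bound for local couplings**, `pp` commutator:
`√‖XP‖ · |C^{pp}_{i,j}(t)| ≤ ‖X‖ · τ^{2a+1} · cosh τ / (2a+1)!` with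
`a = max{0, ⌈(dist(i,j)/R − 1)/2⌉}` and `τ = max{√‖PX‖, √‖XP‖}·|t|`. -/
theorem lieb_robinson_local_pp {V : Type*} [Fintype V] [DecidableEq V]
    (G : SimpleGraph V) (hconn : G.Connected) (R : ℕ) (hR : 1 ≤ R)
    (X P : Matrix V V ℝ) (hX : X.IsSymm) (hP : P.IsSymm)
    (hXloc : ∀ i j : V, R < G.dist i j → X i j = 0)
    (hPloc : ∀ i j : V, R < G.dist i j → P i j = 0)
    (i j : V) (t : ℝ) :
    let τ : ℝ := max (Real.sqrt (l2OpNorm (P * X))) (Real.sqrt (l2OpNorm (X * P))) * |t|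
    let a : ℕ := (max 0 ⌈((G.dist i j : ℝ) / R - 1) / 2⌉).toNat
    Real.sqrt (l2OpNorm (X * P)) * |Cpp X P i j t| ≤
      l2OpNorm X * τ ^ (2 * a + 1) * Real.cosh τ / (Nat.factorial (2 * a + 1)) :=
  lieb_robinson_local_pp_general G hconn R X P hXloc hPloc i j t
end

section
/- Assume X_{i,j} = P_{i,j} = 0 whenever dist(i,j) > R, and let i, j ∈ L and t ∈ ℝ satisfy e·τ < d_{i,j}. Then, with B = (eτ/d_{i,j})^{d_{i,j}} / (√(d_{i,j}) · (1 − (eτ/d_{i,j})²)), one has √‖PX‖·|C^{xx}_{i,j}(t)| ≤ ‖P‖·B, √‖XP‖·|C^{pp}_{i,j}(t)| ≤ ‖X‖·B, |C^{xp}_{i,j}(t)| ≤ B, and |C^{px}_{i,j}(t)| ≤ B. -/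
/-- `C^{xx}_{i,j}(t) = ∑_{n≥0} (−1)^n t^{2n+1} ((PX)^n P)_{i,j}/(2n+1)!`. -/
noncomputable def Cxx {V : Type*} [Fintype V] [DecidableEq V]
    (X P : Matrix V V ℝ) (i j : V) (t : ℝ) : ℝ :=
  ∑' n : ℕ, (-1 : ℝ) ^ n * t ^ (2 * n + 1) * (((P * X) ^ n * P) i j) /
    (Nat.factorial (2 * n + 1))

/-- `C^{xp}_{i,j}(t) = −∑_{n≥0} (−1)^n t^{2n} ((PX)^n)_{i,j}/(2n)!`. -/
noncomputable def Cxp {V : Type*} [Fintype V] [DecidableEq V]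
    (X P : Matrix V V ℝ) (i j : V) (t : ℝ) : ℝ :=
  -∑' n : ℕ, (-1 : ℝ) ^ n * t ^ (2 * n) * (((P * X) ^ n) i j) / (Nat.factorial (2 * n))

/-- `C^{px}_{i,j}(t) = ∑_{n≥0} (−1)^n t^{2n} ((XP)^n)_{i,j}/(2n)!`. -/
noncomputable def Cpx {V : Type*} [Fintype V] [DecidableEq V]
    (X P : Matrix V V ℝ) (i j : V) (t : ℝ) : ℝ :=
  ∑' n : ℕ, (-1 : ℝ) ^ n * t ^ (2 * n) * (((X * P) ^ n) i j) / (Nat.factorial (2 * n))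

/-!
The `n`-th term of each series is the `(i, j)` entry of a product of `2n + s` matrices of range
`R` (`s = 1` for `Cxx`, `Cpp`, `s = 0` for `Cxp`, `Cpx`), so it vanishes unless `2n + s ≥ d`.
The remaining terms are bounded through operator norms by `τ^m / m!` with `m = 2n + s`, and
Stirling's bound `m! ≥ √m (m/e)^m` gives `τ^m / m! ≤ q^m / √d` for `m ≥ d`, where `q = eτ/d < 1`.
Starting from the first admissible `m`, these form a geometric series of ratio `q²` whose first
term is at most `q^d / √d`.
-/

open Real

namespace Matrix

variable {V α : Type*} [Semiring α] {G : SimpleGraph V}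

def IsLocal_s6 (G : SimpleGraph V) (r : ℕ) (A : Matrix V V α) : Prop :=
  ∀ i j, r < G.dist i j → A i j = 0

theorem IsLocal_s6.mul [Fintype V] (hG : G.Connected) {a b : ℕ} {A B : Matrix V V α}
    (hA : IsLocal_s6 G a A) (hB : IsLocal_s6 G b B) : IsLocal_s6 G (a + b) (A * B) := by
  intro i j hij
  rw [mul_apply]
  refine Finset.sum_eq_zero fun k _ => ?_
  by_cases hik : a < G.dist i k
  · rw [hA i k hik, zero_mul]
  · have hkj : b < G.dist k j := by
      have := hG.dist_triangle (u := i) (v := k) (w := j)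
      omega
    rw [hB k j hkj, mul_zero]

theorem isLocal_one [DecidableEq V] : IsLocal_s6 G 0 (1 : Matrix V V α) := by
  intro i j hij
  exact one_apply_ne fun h => by simp [h] at hij

theorem IsLocal_s6.pow [Fintype V] [DecidableEq V] (hG : G.Connected) {a : ℕ} {A : Matrix V V α}
    (hA : IsLocal_s6 G a A) (n : ℕ) : IsLocal_s6 G (n * a) (A ^ n) := by
  induction n with
  | zero => simpa using isLocal_one
  | succ n ih => simpa [pow_succ, add_mul] using ih.mul hG hA

end Matrix

section L2OpNorm

variable {V : Type*} [Fintype V] [DecidableEq V]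

theorem l2OpNorm_nonneg (M : Matrix V V ℝ) : 0 ≤ l2OpNorm M := norm_nonneg _

theorem abs_apply_le_l2OpNorm (M : Matrix V V ℝ) (i j : V) : |M i j| ≤ l2OpNorm M := by
  have hcol : Matrix.toEuclideanCLM (𝕜 := ℝ) M (EuclideanSpace.single j 1) i = M i j := by
    simp [Matrix.mulVec_single]
  calc |M i j| = ‖Matrix.toEuclideanCLM (𝕜 := ℝ) M (EuclideanSpace.single j 1) i‖ := by
        rw [hcol, Real.norm_eq_abs]
    _ ≤ ‖Matrix.toEuclideanCLM (𝕜 := ℝ) M (EuclideanSpace.single j 1)‖ := PiLp.norm_apply_le _ _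
    _ ≤ l2OpNorm M * ‖EuclideanSpace.single j (1 : ℝ)‖ := ContinuousLinearMap.le_opNorm _ _
    _ = l2OpNorm M := by simp

theorem l2OpNorm_pow_mul_le (A B : Matrix V V ℝ) (n : ℕ) :
    l2OpNorm (A ^ n * B) ≤ l2OpNorm A ^ n * l2OpNorm B := by
  rcases Nat.eq_zero_or_pos n with rfl | hn
  · simp
  · simp only [l2OpNorm, map_mul, map_pow]
    exact (norm_mul_le _ _).trans (by gcongr; exact norm_pow_le' _ hn)

theorem abs_pow_apply_le (A : Matrix V V ℝ) (n : ℕ) (i j : V) :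
    |(A ^ n) i j| ≤ l2OpNorm A ^ n := by
  cases n with
  | zero => by_cases h : i = j <;> simp [h]
  | succ n =>
    rw [pow_succ, pow_succ]
    exact (abs_apply_le_l2OpNorm _ i j).trans (l2OpNorm_pow_mul_le A A n)

end L2OpNorm

noncomputable def coneBound (τ d : ℝ) : ℝ :=
  (exp 1 * τ / d) ^ d / (√d * (1 - (exp 1 * τ / d) ^ 2))

theorem pow_div_factorial_le_of_le {τ d : ℝ} {m : ℕ} (hτ : 0 ≤ τ) (hd : 0 < d) (hdm : d ≤ m) :
    τ ^ m / m.factorial ≤ (exp 1 * τ / d) ^ m / √d := by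
  have hstirling : √d * (d / exp 1) ^ m ≤ m.factorial := by
    refine le_trans ?_ (Stirling.le_factorial_stirling m)
    gcongr
    nlinarith [pi_gt_three]
  calc τ ^ m / m.factorial ≤ τ ^ m / (√d * (d / exp 1) ^ m) := by
        gcongr
    _ = (exp 1 * τ / d) ^ m / √d := by
        rw [div_pow, div_pow, mul_pow]
        field_simp

theorem abs_tsum_le_of_le_geometric_tail {f : ℕ → ℝ} {C r : ℝ} (n₀ : ℕ) (hr₀ : 0 ≤ r)
    (hr₁ : r < 1) (hzero : ∀ n < n₀, f n = 0) (htail : ∀ k, |f (k + n₀)| ≤ C * r ^ k) :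
    |∑' n, f n| ≤ C / (1 - r) := by
  have hsupp : Function.support f ⊆ Set.range (· + n₀) := fun n hn =>
    ⟨n - n₀, Nat.sub_add_cancel (not_lt.mp fun h => hn (hzero n h))⟩
  rw [← (add_left_injective n₀).tsum_eq hsupp, div_eq_mul_inv]
  exact tsum_of_norm_bounded ((hasSum_geometric_of_lt_one hr₀ hr₁).mul_left C)
    fun k => (Real.norm_eq_abs _).trans_le (htail k)

theorem abs_tsum_le_coneBound {f : ℕ → ℝ} {τ d K : ℝ} (s : ℕ) (hτ : 0 ≤ τ) (hK : 0 ≤ K)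
    (hcone : exp 1 * τ < d)
    (hf : ∀ n, |f n| ≤ K * τ ^ (2 * n + s) / (2 * n + s).factorial)
    (hz : ∀ n, ((2 * n + s : ℕ) : ℝ) < d → f n = 0) :
    |∑' n, f n| ≤ K * coneBound τ d := by
  have hd : 0 < d := lt_of_le_of_lt (by positivity) hcone
  rw [coneBound]
  set q := exp 1 * τ / d
  have hq₀ : 0 ≤ q := by positivity
  have hq₁ : q < 1 := (div_lt_one hd).mpr hcone
  have hex : ∃ n : ℕ, d ≤ ((2 * n + s : ℕ) : ℝ) :=
    ⟨⌈d⌉₊, (Nat.le_ceil d).trans (by exact_mod_cast (by omega : ⌈d⌉₊ ≤ 2 * ⌈d⌉₊ + s))⟩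
  classical
  set n₀ := Nat.find hex
  have htail (k : ℕ) : |f (k + n₀)| ≤ K * q ^ d / √d * (q ^ 2) ^ k := by
    have hm : d ≤ ((2 * (k + n₀) + s : ℕ) : ℝ) :=
      (Nat.find_spec hex).trans (by exact_mod_cast (by omega : 2 * n₀ + s ≤ 2 * (k + n₀) + s))
    have hsplit : q ^ (2 * (k + n₀) + s) = q ^ (2 * n₀ + s) * (q ^ 2) ^ k := by
      rw [← pow_mul, ← pow_add]; ring_nf
    have hrpow : q ^ (2 * n₀ + s) ≤ q ^ d := by
      rw [← rpow_natCast]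
      exact rpow_le_rpow_of_exponent_ge' hq₀ hq₁.le hd.le (Nat.find_spec hex)
    calc |f (k + n₀)| ≤ K * (τ ^ (2 * (k + n₀) + s) / (2 * (k + n₀) + s).factorial) := by
          rw [← mul_div_assoc]; exact hf _
      _ ≤ K * (q ^ (2 * (k + n₀) + s) / √d) :=
          mul_le_mul_of_nonneg_left (pow_div_factorial_le_of_le hτ hd hm) hK
      _ ≤ K * (q ^ d * (q ^ 2) ^ k / √d) := by
          rw [hsplit]; gcongr
      _ = K * q ^ d / √d * (q ^ 2) ^ k := by ring
  have hgeom := abs_tsum_le_of_le_geometric_tail n₀ (sq_nonneg q) (by nlinarith)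
    (fun n hn => hz n (not_le.mp (Nat.find_min hex hn))) htail
  exact hgeom.trans_eq (by rw [mul_div_assoc, mul_div_assoc, div_div])

theorem pow_mul_abs_tsum_le_coneBound {c : ℕ → ℝ} {a t τ d K : ℝ} (s : ℕ) (ha : 0 ≤ a)
    (hτ : a * |t| ≤ τ) (hcone : exp 1 * τ < d) (hc : ∀ n, |c n| ≤ K * a ^ (2 * n))
    (hz : ∀ n, ((2 * n + s : ℕ) : ℝ) < d → c n = 0) :
    a ^ s * |∑' n : ℕ, (-1 : ℝ) ^ n * t ^ (2 * n + s) * c n / (2 * n + s).factorial| ≤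
      K * coneBound τ d := by
  have hK : 0 ≤ K := by simpa using (abs_nonneg _).trans (hc 0)
  rw [← abs_of_nonneg (pow_nonneg ha s), ← abs_mul, ← tsum_mul_left]
  refine abs_tsum_le_coneBound s ((mul_nonneg ha (abs_nonneg t)).trans hτ) hK hcone
    (fun n => ?_) (fun n hn => by simp [hz n hn])
  calc |a ^ s * ((-1 : ℝ) ^ n * t ^ (2 * n + s) * c n / (2 * n + s).factorial)|
      = a ^ s * |t| ^ (2 * n + s) * |c n| / (2 * n + s).factorial := by
        simp only [abs_mul, abs_pow, abs_of_nonneg ha, abs_div, abs_neg, abs_one, one_pow, one_mul,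
          Nat.abs_cast]
        ring
    _ ≤ a ^ s * |t| ^ (2 * n + s) * (K * a ^ (2 * n)) / (2 * n + s).factorial := by
        gcongr; exact hc n
    _ = K * (a * |t|) ^ (2 * n + s) / (2 * n + s).factorial := by ring
    _ ≤ K * τ ^ (2 * n + s) / (2 * n + s).factorial := by gcongr

-- For `R = 0` the hypothesis is false, as `D / 0 = 0` in `ℝ`.
theorem mul_lt_of_cast_lt_div {m D R : ℕ} (h : (m : ℝ) < D / R) : m * R < D := by
  rcases Nat.eq_zero_or_pos R with rfl | hR
  · exact absurd h (by simp)
  · exact_mod_cast (lt_div_iff₀ (by exact_mod_cast hR)).mp h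

section LocalSeries

variable {V : Type*} [Fintype V] [DecidableEq V] {G : SimpleGraph V} {R : ℕ}
  {A B : Matrix V V ℝ} {i j : V} {t τ : ℝ}

theorem sqrt_mul_abs_tsum_odd_le_coneBound (hG : G.Connected) (hA : A.IsLocal_s6 G R)
    (hB : B.IsLocal_s6 G R) (hτ : √(l2OpNorm (B * A)) * |t| ≤ τ)
    (hcone : exp 1 * τ < G.dist i j / R) :
    √(l2OpNorm (B * A)) * |∑' n : ℕ, (-1 : ℝ) ^ n * t ^ (2 * n + 1) * (((B * A) ^ n * B) i j) /
      (Nat.factorial (2 * n + 1))| ≤ l2OpNorm B * coneBound τ (G.dist i j / R) := by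
  have hsq : √(l2OpNorm (B * A)) ^ 2 = l2OpNorm (B * A) := sq_sqrt (l2OpNorm_nonneg _)
  have h := pow_mul_abs_tsum_le_coneBound 1 (sqrt_nonneg _) hτ hcone
    (fun n => (abs_apply_le_l2OpNorm _ i j).trans
      ((l2OpNorm_pow_mul_le _ _ n).trans_eq (by rw [pow_mul, hsq, mul_comm])))
    (fun n hn => (((hB.mul hG hA).pow hG n).mul hG hB) i j
      (by rw [show n * (R + R) + R = (2 * n + 1) * R by ring]; exact mul_lt_of_cast_lt_div hn))
  rwa [pow_one] at h

theorem abs_tsum_even_le_coneBound (hG : G.Connected) (hA : A.IsLocal_s6 G R)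
    (hB : B.IsLocal_s6 G R) (hτ : √(l2OpNorm (B * A)) * |t| ≤ τ)
    (hcone : exp 1 * τ < G.dist i j / R) :
    |∑' n : ℕ, (-1 : ℝ) ^ n * t ^ (2 * n) * (((B * A) ^ n) i j) / (Nat.factorial (2 * n))| ≤
      coneBound τ (G.dist i j / R) := by
  have hsq : √(l2OpNorm (B * A)) ^ 2 = l2OpNorm (B * A) := sq_sqrt (l2OpNorm_nonneg _)
  have h := pow_mul_abs_tsum_le_coneBound 0 (sqrt_nonneg _) hτ hcone (K := 1)
    (fun n => (abs_pow_apply_le _ n i j).trans_eq (by rw [pow_mul, hsq, one_mul]))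
    (fun n hn => ((hB.mul hG hA).pow hG n) i j
      (by rw [show n * (R + R) = (2 * n + 0) * R by ring]; exact mul_lt_of_cast_lt_div hn))
  rwa [pow_zero, one_mul, one_mul] at h

end LocalSeries

theorem lieb_robinson_local_causal_cone_general {V : Type*} [Fintype V] [DecidableEq V]
    (G : SimpleGraph V) (hconn : G.Connected) (R : ℕ)
    (X P : Matrix V V ℝ)
    (hXloc : ∀ i j : V, R < G.dist i j → X i j = 0)
    (hPloc : ∀ i j : V, R < G.dist i j → P i j = 0)
    (i j : V) (t : ℝ)
    (hcone : Real.exp 1 *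
        (max (Real.sqrt (l2OpNorm (P * X))) (Real.sqrt (l2OpNorm (X * P))) * |t|) <
        (G.dist i j : ℝ) / R) :
    let τ : ℝ := max (Real.sqrt (l2OpNorm (P * X))) (Real.sqrt (l2OpNorm (X * P))) * |t|
    let d : ℝ := (G.dist i j : ℝ) / R
    let B : ℝ := (Real.exp 1 * τ / d) ^ d / (Real.sqrt d * (1 - (Real.exp 1 * τ / d) ^ 2))
    Real.sqrt (l2OpNorm (P * X)) * |Cxx X P i j t| ≤ l2OpNorm P * B ∧
    Real.sqrt (l2OpNorm (X * P)) * |Cpp X P i j t| ≤ l2OpNorm X * B ∧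
    |Cxp X P i j t| ≤ B ∧ |Cpx X P i j t| ≤ B := by
  intro τ d B
  have hτPX : √(l2OpNorm (P * X)) * |t| ≤ τ :=
    mul_le_mul_of_nonneg_right (le_max_left _ _) (abs_nonneg t)
  have hτXP : √(l2OpNorm (X * P)) * |t| ≤ τ :=
    mul_le_mul_of_nonneg_right (le_max_right _ _) (abs_nonneg t)
  refine ⟨sqrt_mul_abs_tsum_odd_le_coneBound hconn hXloc hPloc hτPX hcone,
    sqrt_mul_abs_tsum_odd_le_coneBound hconn hPloc hXloc hτXP hcone, ?_,
    abs_tsum_even_le_coneBound hconn hPloc hXloc hτXP hcone⟩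
  rw [Cxp, abs_neg]
  exact abs_tsum_even_le_coneBound hconn hXloc hPloc hτPX hcone

/-- **Lieb-Robinson bounds making the causal cone explicit.** For local couplings of
range `R`, if `e·τ < d_{i,j} = dist(i,j)/R`, then with
`B = (eτ/d)^d / (√d · (1 − (eτ/d)²))` all four commutator series obey the stated bounds. -/
theorem lieb_robinson_local_causal_cone {V : Type*} [Fintype V] [DecidableEq V]
    (G : SimpleGraph V) (hconn : G.Connected) (R : ℕ) (hR : 1 ≤ R)
    (X P : Matrix V V ℝ) (hX : X.IsSymm) (hP : P.IsSymm)
    (hXloc : ∀ i j : V, R < G.dist i j → X i j = 0)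
    (hPloc : ∀ i j : V, R < G.dist i j → P i j = 0)
    (i j : V) (t : ℝ)
    (hcone : Real.exp 1 *
        (max (Real.sqrt (l2OpNorm (P * X))) (Real.sqrt (l2OpNorm (X * P))) * |t|) <
        (G.dist i j : ℝ) / R) :
    let τ : ℝ := max (Real.sqrt (l2OpNorm (P * X))) (Real.sqrt (l2OpNorm (X * P))) * |t|
    let d : ℝ := (G.dist i j : ℝ) / R
    let B : ℝ := (Real.exp 1 * τ / d) ^ d / (Real.sqrt d * (1 - (Real.exp 1 * τ / d) ^ 2))
    Real.sqrt (l2OpNorm (P * X)) * |Cxx X P i j t| ≤ l2OpNorm P * B ∧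
    Real.sqrt (l2OpNorm (X * P)) * |Cpp X P i j t| ≤ l2OpNorm X * B ∧
    |Cxp X P i j t| ≤ B ∧ |Cpx X P i j t| ≤ B :=
  lieb_robinson_local_causal_cone_general G hconn R X P hXloc hPloc i j t hcone
end

section
/- Suppose the graph has dimension at most D with constant c_D, let η > D and c_0 > 0 be real, and let M₁, …, M_n (n ≥ 1) be real matrices indexed by L, each satisfying |(M_k)_{i,j}| ≤ c_0 · (1 + dist(i,j))^{−η} for all i, j. Then the product satisfies |(M₁M₂⋯M_n)_{i,j}| ≤ c_0^n · a_0^{n−1} · (1 + dist(i,j))^{−η} for all i, j, where a_0 = c_D · 2^{η+1} · ζ(η + 1 − D). In particular, |(M^n)_{i,j}| ≤ c_0^n · a_0^{n−1} · (1 + dist(i,j))^{−η} whenever |M_{i,j}| ≤ c_0 · (1 + dist(i,j))^{−η}. -/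
/-- The Riemann zeta function at a real argument, `ζ(s) = ∑_{n≥1} n^{−s}`. -/
noncomputable def zetaReal (s : ℝ) : ℝ := ∑' n : ℕ, ((n : ℝ) + 1) ^ (-s)

lemma summable_zeta {s : ℝ} (hs : 1 < s) :
    Summable (fun n : ℕ => ((n : ℝ) + 1) ^ (-s)) := by
  have h : Summable (fun n : ℕ => (n : ℝ) ^ (-s)) :=
    Real.summable_nat_rpow.2 (by linarith)
  have := (summable_nat_add_iff 1).2 h
  refine this.congr fun n => ?_
  push_cast
  ring_nf

lemma zetaReal_nonneg {s : ℝ} : 0 ≤ zetaReal s :=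
  tsum_nonneg fun n => Real.rpow_nonneg (by positivity) _

lemma key_pt {a b c η : ℝ} (ha : 1 ≤ a) (hb : 1 ≤ b) (hc : 0 < c) (habc : c ≤ a + b)
    (hη : 0 < η) :
    a ^ (-η) * b ^ (-η) ≤ 2 ^ η * c ^ (-η) * (a ^ (-η) + b ^ (-η)) := by
  have key : ∀ x y : ℝ, 1 ≤ x → 1 ≤ y → x ≤ y → c ≤ x + y →
      x ^ (-η) * y ^ (-η) ≤ 2 ^ η * c ^ (-η) * (x ^ (-η) + y ^ (-η)) := by
    intro x y hx hy hxy hcxy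
    have h1 : y ^ (-η) ≤ (c / 2) ^ (-η) :=
      Real.rpow_le_rpow_of_nonpos (by positivity) (by linarith) (by linarith)
    have h2 : (c / 2) ^ (-η) = 2 ^ η * c ^ (-η) := by
      rw [Real.div_rpow hc.le (by norm_num), Real.rpow_neg (by norm_num : (0:ℝ) ≤ 2)]
      field_simp
    have hxn : (0:ℝ) ≤ x ^ (-η) := Real.rpow_nonneg (by linarith) _
    have hyn : (0:ℝ) ≤ y ^ (-η) := Real.rpow_nonneg (by linarith) _
    have h3 : x ^ (-η) * y ^ (-η) ≤ x ^ (-η) * (2 ^ η * c ^ (-η)) :=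
      mul_le_mul_of_nonneg_left (h1.trans_eq h2) hxn
    have h4 : (0:ℝ) ≤ 2 ^ η * c ^ (-η) := by positivity
    nlinarith
  rcases le_total a b with hab | hab
  · exact key a b ha hb hab habc
  · have := key b a hb ha hab (by linarith)
    linarith [this]


lemma sphere_sum_bound {V : Type*} [Fintype V] [DecidableEq V]
    (G : SimpleGraph V) (hconn : G.Connected) (D : ℕ) (hD : 1 ≤ D)
    (cD : ℝ) (hcD : 1 ≤ cD)
    (hdim : ∀ i : V, ∀ r : ℕ, 1 ≤ r →
      ((Finset.univ.filter (fun k : V => G.dist i k = r)).card : ℝ) ≤ cD * (r : ℝ) ^ (D - 1))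
    (η : ℝ) (hη : (D : ℝ) < η) (i : V) :
    ∑ k : V, (1 + (G.dist i k : ℝ)) ^ (-η) ≤ cD * zetaReal (η + 1 - D) := by
  have hD1 : (1:ℝ) ≤ D := by exact_mod_cast hD
  have hη0 : 0 < η := by linarith
  have hs : 1 < η + 1 - D := by linarith
  have step1 : ∑ k : V, (1 + (G.dist i k : ℝ)) ^ (-η)
      = ∑ r ∈ Finset.univ.image (G.dist i),
          ((Finset.univ.filter (fun k : V => G.dist i k = r)).card : ℝ)
            * (1 + (r : ℝ)) ^ (-η) := by
    rw [Finset.sum_comp (fun r : ℕ => (1 + (r : ℝ)) ^ (-η)) (G.dist i)]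
    simp [nsmul_eq_mul]
  have step2 : ∀ r : ℕ,
      ((Finset.univ.filter (fun k : V => G.dist i k = r)).card : ℝ) * (1 + (r : ℝ)) ^ (-η)
        ≤ cD * ((r : ℝ) + 1) ^ (-(η + 1 - D)) := by
    intro r
    rcases Nat.eq_zero_or_pos r with hr | hr
    · subst hr
      have hsub : (Finset.univ.filter (fun k : V => G.dist i k = 0)) ⊆ {i} := by
        intro k hk
        simp only [Finset.mem_filter] at hk
        have := (hconn.dist_eq_zero_iff).1 hk.2
        simp [← this]
      have hcard : ((Finset.univ.filter (fun k : V => G.dist i k = 0)).card : ℝ) ≤ 1 := by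
        exact_mod_cast Finset.card_le_card hsub
      simp only [Nat.cast_zero, add_zero, zero_add]
      rw [Real.one_rpow]
      calc ((Finset.univ.filter (fun k : V => G.dist i k = 0)).card : ℝ) * 1
          ≤ 1 * 1 := by nlinarith
        _ ≤ cD * (1:ℝ) ^ (-(η + 1 - D)) := by rw [Real.one_rpow]; nlinarith
    · have hcard := hdim i r hr
      have hrpos : (1:ℝ) ≤ (r:ℝ) := by exact_mod_cast hr
      have h1 : (r : ℝ) ^ (D - 1) ≤ (1 + (r:ℝ)) ^ (D - 1) :=
        pow_le_pow_left₀ (by linarith) (by linarith) _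
      have hbase : (0:ℝ) < 1 + (r:ℝ) := by linarith
      have h2 : ((1 + (r:ℝ)) ^ (D - 1) : ℝ) = (1 + (r:ℝ)) ^ ((D:ℝ) - 1) := by
        rw [← Real.rpow_natCast (1 + (r:ℝ)) (D - 1)]
        congr 1
        have : ((D - 1 : ℕ) : ℝ) = (D:ℝ) - 1 := by
          push_cast [Nat.cast_sub hD]
          ring
        rw [this]
      have h3 : (1 + (r:ℝ)) ^ ((D:ℝ) - 1) * (1 + (r:ℝ)) ^ (-η)
          = (1 + (r:ℝ)) ^ (-(η + 1 - D)) := by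
        rw [← Real.rpow_add hbase]
        ring_nf
      have hpow : (0:ℝ) ≤ (1 + (r:ℝ)) ^ (-η) := Real.rpow_nonneg hbase.le _
      calc ((Finset.univ.filter (fun k : V => G.dist i k = r)).card : ℝ) * (1 + (r:ℝ)) ^ (-η)
          ≤ cD * (r:ℝ) ^ (D - 1) * (1 + (r:ℝ)) ^ (-η) := by
            exact mul_le_mul_of_nonneg_right hcard hpow
        _ ≤ cD * (1 + (r:ℝ)) ^ (D - 1) * (1 + (r:ℝ)) ^ (-η) := by
            have hcD0 : (0:ℝ) ≤ cD := by linarith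
            have := mul_le_mul_of_nonneg_right (mul_le_mul_of_nonneg_left h1 hcD0) hpow
            linarith
        _ = cD * ((1 + (r:ℝ)) ^ ((D:ℝ) - 1) * (1 + (r:ℝ)) ^ (-η)) := by rw [h2]; ring
        _ = cD * (1 + (r:ℝ)) ^ (-(η + 1 - D)) := by rw [h3]
        _ = cD * ((r:ℝ) + 1) ^ (-(η + 1 - D)) := by ring_nf
  calc ∑ k : V, (1 + (G.dist i k : ℝ)) ^ (-η)
      ≤ ∑ r ∈ Finset.univ.image (G.dist i), cD * ((r : ℝ) + 1) ^ (-(η + 1 - D)) := by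
        rw [step1]; exact Finset.sum_le_sum fun r _ => step2 r
    _ = cD * ∑ r ∈ Finset.univ.image (G.dist i), ((r : ℝ) + 1) ^ (-(η + 1 - D)) := by
        rw [Finset.mul_sum]
    _ ≤ cD * zetaReal (η + 1 - D) := by
        have hZ : ∑ r ∈ Finset.univ.image (G.dist i), ((r : ℝ) + 1) ^ (-(η + 1 - D))
            ≤ zetaReal (η + 1 - D) :=
          Summable.sum_le_tsum _ (fun r _ => Real.rpow_nonneg (by positivity) _) (summable_zeta hs)
        nlinarith [hZ]


section aux

variable {V : Type*} [Fintype V] [DecidableEq V]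

lemma conv_bound
    (G : SimpleGraph V) (hconn : G.Connected) (D : ℕ) (hD : 1 ≤ D)
    (cD : ℝ) (hcD : 1 ≤ cD)
    (hdim : ∀ i : V, ∀ r : ℕ, 1 ≤ r →
      ((Finset.univ.filter (fun k : V => G.dist i k = r)).card : ℝ) ≤ cD * (r : ℝ) ^ (D - 1))
    (η : ℝ) (hη : (D : ℝ) < η) (i j : V) :
    ∑ k : V, (1 + (G.dist i k : ℝ)) ^ (-η) * (1 + (G.dist k j : ℝ)) ^ (-η)
      ≤ cD * (2:ℝ) ^ (η + 1) * zetaReal (η + 1 - D) * (1 + (G.dist i j : ℝ)) ^ (-η) := by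
  have hD1 : (1:ℝ) ≤ D := by exact_mod_cast hD
  have hη0 : 0 < η := by linarith
  have hc : (0:ℝ) < 1 + (G.dist i j : ℝ) := by positivity
  have hcn : (0:ℝ) ≤ (1 + (G.dist i j : ℝ)) ^ (-η) := Real.rpow_nonneg hc.le _
  have hstep : ∀ k : V,
      (1 + (G.dist i k : ℝ)) ^ (-η) * (1 + (G.dist k j : ℝ)) ^ (-η)
        ≤ 2 ^ η * (1 + (G.dist i j : ℝ)) ^ (-η) *
            ((1 + (G.dist i k : ℝ)) ^ (-η) + (1 + (G.dist k j : ℝ)) ^ (-η)) := by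
    intro k
    have htri : G.dist i j ≤ G.dist i k + G.dist k j :=
      hconn.dist_triangle
    have htri' : (1 + (G.dist i j : ℝ)) ≤ (1 + (G.dist i k : ℝ)) + (1 + (G.dist k j : ℝ)) := by
      have : (G.dist i j : ℝ) ≤ (G.dist i k : ℝ) + (G.dist k j : ℝ) := by exact_mod_cast htri
      linarith
    exact key_pt (le_add_of_nonneg_right (by positivity)) (le_add_of_nonneg_right (by positivity)) hc htri' hη0
  have hSa := sphere_sum_bound G hconn D hD cD hcD hdim η hη i
  have hSb : ∑ k : V, (1 + (G.dist k j : ℝ)) ^ (-η) ≤ cD * zetaReal (η + 1 - D) := by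
    have := sphere_sum_bound G hconn D hD cD hcD hdim η hη j
    refine le_trans (le_of_eq ?_) this
    exact Finset.sum_congr rfl fun k _ => by rw [SimpleGraph.dist_comm]
  calc ∑ k : V, (1 + (G.dist i k : ℝ)) ^ (-η) * (1 + (G.dist k j : ℝ)) ^ (-η)
      ≤ ∑ k : V, 2 ^ η * (1 + (G.dist i j : ℝ)) ^ (-η) *
            ((1 + (G.dist i k : ℝ)) ^ (-η) + (1 + (G.dist k j : ℝ)) ^ (-η)) :=
        Finset.sum_le_sum fun k _ => hstep k
    _ = 2 ^ η * (1 + (G.dist i j : ℝ)) ^ (-η) *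
          ((∑ k : V, (1 + (G.dist i k : ℝ)) ^ (-η)) +
            ∑ k : V, (1 + (G.dist k j : ℝ)) ^ (-η)) := by
        rw [← Finset.mul_sum, Finset.sum_add_distrib]
    _ ≤ 2 ^ η * (1 + (G.dist i j : ℝ)) ^ (-η) * (2 * (cD * zetaReal (η + 1 - D))) := by
        have h2 : (0:ℝ) ≤ 2 ^ η * (1 + (G.dist i j : ℝ)) ^ (-η) := by positivity
        have := add_le_add hSa hSb
        nlinarith
    _ = cD * (2:ℝ) ^ (η + 1) * zetaReal (η + 1 - D) * (1 + (G.dist i j : ℝ)) ^ (-η) := by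
        rw [Real.rpow_add (by norm_num : (0:ℝ) < 2), Real.rpow_one]
        ring

end aux
lemma prod_bound {V : Type*} [Fintype V] [DecidableEq V]
    (G : SimpleGraph V) (hconn : G.Connected) (D : ℕ) (hD : 1 ≤ D)
    (cD : ℝ) (hcD : 1 ≤ cD)
    (hdim : ∀ i : V, ∀ r : ℕ, 1 ≤ r →
      ((Finset.univ.filter (fun k : V => G.dist i k = r)).card : ℝ) ≤ cD * (r : ℝ) ^ (D - 1))
    (η : ℝ) (hη : (D : ℝ) < η) (c₀ : ℝ) (hc₀ : 0 < c₀) :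
    ∀ n : ℕ, 1 ≤ n → ∀ M : Fin n → Matrix V V ℝ,
      (∀ k : Fin n, ∀ i j : V, |M k i j| ≤ c₀ * (1 + (G.dist i j : ℝ)) ^ (-η)) →
      ∀ i j : V, |(List.ofFn M).prod i j| ≤
        c₀ ^ n * (cD * (2 : ℝ) ^ (η + 1) * zetaReal (η + 1 - D)) ^ (n - 1) *
          (1 + (G.dist i j : ℝ)) ^ (-η) := by
  set a₀ : ℝ := cD * (2 : ℝ) ^ (η + 1) * zetaReal (η + 1 - D) with ha₀
  have ha₀0 : 0 ≤ a₀ := by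
    have h1 : (0:ℝ) ≤ cD := by linarith
    have h2 : (0:ℝ) ≤ (2:ℝ) ^ (η + 1) := Real.rpow_nonneg (by norm_num) _
    have h3 := zetaReal_nonneg (s := η + 1 - D)
    positivity
  intro n hn
  induction n, hn using Nat.le_induction with
  | base =>
    intro M hM i j
    have hprod : (List.ofFn M).prod = M 0 := by
      simp [List.ofFn_succ]
    rw [hprod]
    simpa using hM 0 i j
  | succ n hn ih =>
    intro M hM i j
    have hprod : (List.ofFn M).prod = M 0 * (List.ofFn (fun i : Fin n => M i.succ)).prod := by
      rw [List.ofFn_succ, List.prod_cons]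
    have hrest := ih (fun i : Fin n => M i.succ) (fun k => hM k.succ)
    rw [hprod, Matrix.mul_apply]
    have hbound : ∀ k : V, |M 0 i k * (List.ofFn (fun i : Fin n => M i.succ)).prod k j|
        ≤ c₀ ^ (n + 1) * a₀ ^ (n - 1) *
            ((1 + (G.dist i k : ℝ)) ^ (-η) * (1 + (G.dist k j : ℝ)) ^ (-η)) := by
      intro k
      rw [abs_mul]
      have h1 := hM 0 i k
      have h2 := hrest k j
      have hA : (0:ℝ) ≤ (1 + (G.dist i k : ℝ)) ^ (-η) := Real.rpow_nonneg (by positivity) _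
      calc |M 0 i k| * |(List.ofFn (fun i : Fin n => M i.succ)).prod k j|
          ≤ (c₀ * (1 + (G.dist i k : ℝ)) ^ (-η)) *
              (c₀ ^ n * a₀ ^ (n - 1) * (1 + (G.dist k j : ℝ)) ^ (-η)) :=
            mul_le_mul h1 h2 (abs_nonneg _) (by positivity)
        _ = c₀ ^ (n + 1) * a₀ ^ (n - 1) *
              ((1 + (G.dist i k : ℝ)) ^ (-η) * (1 + (G.dist k j : ℝ)) ^ (-η)) := by
            rw [pow_succ]; ring
    calc |∑ k : V, M 0 i k * (List.ofFn (fun i : Fin n => M i.succ)).prod k j|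
        ≤ ∑ k : V, |M 0 i k * (List.ofFn (fun i : Fin n => M i.succ)).prod k j| :=
          Finset.abs_sum_le_sum_abs _ _
      _ ≤ ∑ k : V, c₀ ^ (n + 1) * a₀ ^ (n - 1) *
            ((1 + (G.dist i k : ℝ)) ^ (-η) * (1 + (G.dist k j : ℝ)) ^ (-η)) :=
          Finset.sum_le_sum fun k _ => hbound k
      _ = c₀ ^ (n + 1) * a₀ ^ (n - 1) *
            ∑ k : V, (1 + (G.dist i k : ℝ)) ^ (-η) * (1 + (G.dist k j : ℝ)) ^ (-η) := by
          rw [Finset.mul_sum]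
      _ ≤ c₀ ^ (n + 1) * a₀ ^ (n - 1) * (a₀ * (1 + (G.dist i j : ℝ)) ^ (-η)) := by
          have hX : (0:ℝ) ≤ c₀ ^ (n + 1) * a₀ ^ (n - 1) := by positivity
          exact mul_le_mul_of_nonneg_left
            (conv_bound G hconn D hD cD hcD hdim η hη i j) hX
      _ = c₀ ^ (n + 1) * a₀ ^ (n + 1 - 1) * (1 + (G.dist i j : ℝ)) ^ (-η) := by
          have : a₀ ^ (n - 1) * a₀ = a₀ ^ n := by
            rw [← pow_succ, Nat.sub_add_cancel hn]
          simp only [Nat.add_sub_cancel]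
          rw [← this]; ring


/-- **Products of algebraically decaying couplings.** On a graph of dimension `D` with
constant `c_D`, if `|(M_k)_{i,j}| ≤ c₀·(1 + dist(i,j))^{−η}` for `k = 1, …, n` (`n ≥ 1`)
with `η > D`, then `|(M₁⋯M_n)_{i,j}| ≤ c₀^n·a₀^{n−1}·(1 + dist(i,j))^{−η}` where
`a₀ = c_D · 2^{η+1} · ζ(η + 1 − D)`; in particular the same bound holds for `(M^n)_{i,j}`. -/
theorem matrix_prod_decay {V : Type*} [Fintype V] [DecidableEq V]
    (G : SimpleGraph V) (hconn : G.Connected) (D : ℕ) (hD : 1 ≤ D)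
    (cD : ℝ) (hcD : 1 ≤ cD)
    (hdim : ∀ i : V, ∀ r : ℕ, 1 ≤ r →
      ((Finset.univ.filter (fun k : V => G.dist i k = r)).card : ℝ) ≤ cD * (r : ℝ) ^ (D - 1))
    (η : ℝ) (hη : (D : ℝ) < η) (c₀ : ℝ) (hc₀ : 0 < c₀) (n : ℕ) (hn : 1 ≤ n) :
    (∀ M : Fin n → Matrix V V ℝ,
      (∀ k : Fin n, ∀ i j : V, |M k i j| ≤ c₀ * (1 + (G.dist i j : ℝ)) ^ (-η)) →
      ∀ i j : V, |(List.ofFn M).prod i j| ≤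
        c₀ ^ n * (cD * (2 : ℝ) ^ (η + 1) * zetaReal (η + 1 - D)) ^ (n - 1) *
          (1 + (G.dist i j : ℝ)) ^ (-η)) ∧
    (∀ M : Matrix V V ℝ,
      (∀ i j : V, |M i j| ≤ c₀ * (1 + (G.dist i j : ℝ)) ^ (-η)) →
      ∀ i j : V, |(M ^ n) i j| ≤
        c₀ ^ n * (cD * (2 : ℝ) ^ (η + 1) * zetaReal (η + 1 - D)) ^ (n - 1) *
          (1 + (G.dist i j : ℝ)) ^ (-η)) := by
  constructor
  · exact prod_bound G hconn D hD cD hcD hdim η hη c₀ hc₀ n hn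
  · intro M hM i j
    have hpow : M ^ n = (List.ofFn (fun _ : Fin n => M)).prod := by
      rw [List.ofFn_const, List.prod_replicate]
    rw [hpow]
    exact prod_bound G hconn D hD cD hcD hdim η hη c₀ hc₀ n hn
      (fun _ : Fin n => M) (fun _ => hM) i j
end
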